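/- Main theorem (analytic core): Let V be the exponent function of a simple max-stable vector with positive continuous density on (0,∞)^I, and let A, B be disjoint nonempty subsets with C = I\(A∪B). If the conditional-independence identity G(x_A|x_C)·G(x_B|x_C) = G(x_{A∪B}|x_C) holds for all x ∈ (0,∞)^I, then d_{A,B}(x) := V^{A∪C}(x_{A∪C}) + V^{B∪C}(x_{B∪C}) − V(x) − V^C(x_C) vanishes identically, and consequently V^A(x_A) + V^B(x_B) = V^{A∪B}(x_{A∪B}) for all x, i.e. X_A and X_B are independent. -/

import Mathlib

open Finset MeasureTheory

variable {ι : Type*} [DecidableEq ι]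

/-- Maximum over a finite set with the convention `max ∅ = 0`. -/
noncomputable def fmax (S : Finset ι) (a : ι → ℝ) : ℝ := S.fold max 0 a

/-- Exponent function `V^J(x) = ∫ max_{i∈J} ω_i/x_i dH`. -/
noncomputable def Vexp [Fintype ι] (H : Measure (ι → ℝ)) (x : ι → ℝ) (J : Finset ι) : ℝ :=
  ∫ ω, fmax J (fun i => ω i / x i) ∂H

/-- Partial derivative of `f : (ι → ℝ) → ℝ` in the coordinate `i`. -/
noncomputable def pd (i : ι) (f : (ι → ℝ) → ℝ) : (ι → ℝ) → ℝ :=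
  fun x => deriv (fun t => f (Function.update x i t)) (x i)

/-- Mixed partial derivative in the coordinates of the finite set `C`. -/
noncomputable def pdSet (C : Finset ι) (f : (ι → ℝ) → ℝ) : (ι → ℝ) → ℝ :=
  C.toList.foldr pd f

section CIauxSection
open Filter Set Topology
set_option linter.unusedSectionVars false

namespace CIaux

def Opos (ι : Type*) : Set (ι → ℝ) := {x | ∀ i, 0 < x i}

lemma isOpen_Opos [Fintype ι] : IsOpen (Opos ι) := by
  have h : Opos ι = Set.pi Set.univ (fun _ : ι => Set.Ioi (0:ℝ)) := by
    ext x; simp [Opos, Set.mem_pi]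
  rw [h]
  exact isOpen_set_pi Set.finite_univ (fun i _ => isOpen_Ioi)

lemma smul_mem_Opos {x : ι → ℝ} (hx : x ∈ Opos ι) {t : ℝ} (ht : 0 < t) :
    t • x ∈ Opos ι := fun i => mul_pos ht (hx i)

lemma hasDerivAt_update [Fintype ι] (y : ι → ℝ) (i : ι) (t : ℝ) :
    HasDerivAt (fun s => Function.update y i s) (Pi.single i 1) t := by
  have h : (fun s : ℝ => Function.update y i s)
      = fun s => y + (s - y i) • (Pi.single i (1:ℝ) : ι → ℝ) := by
    funext s; funext j
    rcases eq_or_ne j i with rfl | hj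
    · simp
    · simp [Function.update_of_ne hj, Pi.single_eq_of_ne hj]
  rw [h]
  simpa using (((hasDerivAt_id t).sub_const (y i)).smul_const
    ((Pi.single i (1:ℝ) : ι → ℝ))).const_add y

lemma pd_hasDerivAt [Fintype ι] {f : (ι → ℝ) → ℝ} {y : ι → ℝ} (hf : DifferentiableAt ℝ f y) (i : ι) :
    HasDerivAt (fun s => f (Function.update y i s)) (fderiv ℝ f y (Pi.single i 1)) (y i) := by
  have h1 := hasDerivAt_update y i (y i)
  have h2 : HasFDerivAt f (fderiv ℝ f y) (Function.update y i (y i)) := by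
    rw [Function.update_eq_self]; exact hf.hasFDerivAt
  exact h2.comp_hasDerivAt (y i) h1

lemma pd_eq_fderiv [Fintype ι] {f : (ι → ℝ) → ℝ} {y : ι → ℝ} (hf : DifferentiableAt ℝ f y) (i : ι) :
    pd i f y = fderiv ℝ f y (Pi.single i 1) := (pd_hasDerivAt hf i).deriv

lemma diffAt {f : (ι → ℝ) → ℝ} [Fintype ι] (hf : ContDiffOn ℝ (⊤ : ℕ∞) f (Opos ι)) {x : ι → ℝ}
    (hx : x ∈ Opos ι) : DifferentiableAt ℝ f x :=
  ((hf.differentiableOn (by simp)).differentiableAt (isOpen_Opos.mem_nhds hx))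



variable [Fintype ι]

structure Good (k : ℕ) (g : (ι → ℝ) → ℝ) : Prop where
  smooth : ContDiffOn ℝ (⊤ : ℕ∞) g (Opos ι)
  homog : ∀ t : ℝ, 0 < t → ∀ x ∈ Opos ι, t ^ k * g (t • x) = g x

lemma Good.one : Good (ι := ι) 0 (fun _ => 1) :=
  ⟨contDiffOn_const, by intro t ht x hx; simp⟩

lemma Good.diffAt {k : ℕ} {g : (ι → ℝ) → ℝ} (hg : Good k g) {x : ι → ℝ} (hx : x ∈ Opos ι) :
    DifferentiableAt ℝ g x := CIaux.diffAt hg.smooth hx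

lemma Good.of_eq {k k' : ℕ} {g : (ι → ℝ) → ℝ} (hg : Good k g) (h : k = k') : Good k' g :=
  h ▸ hg

lemma Good.mul {k m : ℕ} {g h : (ι → ℝ) → ℝ} (hg : Good k g) (hh : Good m h) :
    Good (k + m) (fun y => g y * h y) := by
  refine ⟨hg.smooth.mul hh.smooth, ?_⟩
  intro t ht x hx
  have h1 := hg.homog t ht x hx
  have h2 := hh.homog t ht x hx
  calc t ^ (k + m) * (g (t • x) * h (t • x))
      = (t ^ k * g (t • x)) * (t ^ m * h (t • x)) := by ring
    _ = g x * h x := by rw [h1, h2]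

lemma Good.neg {k : ℕ} {g : (ι → ℝ) → ℝ} (hg : Good k g) : Good k (fun y => -(g y)) :=
  ⟨hg.smooth.neg, fun t ht x hx => by
    rw [mul_neg, hg.homog t ht x hx]⟩

/-- The eventual membership of the coordinate line in the orthant. -/
lemma update_mem_eventually {x : ι → ℝ} (hx : x ∈ Opos ι) (i : ι) :
    ∀ᶠ s in 𝓝 (x i), Function.update x i s ∈ Opos ι := by
  have hc : ContinuousAt (fun s => Function.update x i s) (x i) :=
    (hasDerivAt_update x i (x i)).continuousAt
  have hmem : Function.update x i (x i) ∈ Opos ι := by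
    rwa [Function.update_eq_self]
  exact hc.preimage_mem_nhds (isOpen_Opos.mem_nhds hmem)

lemma smul_update (t s : ℝ) (x : ι → ℝ) (i : ι) :
    t • Function.update x i s = Function.update (t • x) i (t * s) := by
  funext j
  rcases eq_or_ne j i with rfl | hj
  · simp
  · simp [Function.update_of_ne hj]

lemma Good.pd {k : ℕ} {g : (ι → ℝ) → ℝ} (hg : Good k g) (i : ι) :
    Good (k + 1) (_root_.pd i g) := by
  have hpd_eq : ∀ y ∈ Opos ι, _root_.pd i g y = fderiv ℝ g y (Pi.single i 1) :=
    fun y hy => pd_eq_fderiv (hg.diffAt hy) i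
  constructor
  · -- smoothness
    have hfd : ContDiffOn ℝ (⊤ : ℕ∞) (fderiv ℝ g) (Opos ι) :=
      hg.smooth.fderiv_of_isOpen isOpen_Opos (by simp)
    have : ContDiffOn ℝ (⊤ : ℕ∞) (fun y => fderiv ℝ g y (Pi.single i 1)) (Opos ι) :=
      hfd.clm_apply contDiffOn_const
    exact this.congr fun y hy => hpd_eq y hy
  · -- homogeneity
    intro t ht x hx
    have hxt : t • x ∈ Opos ι := smul_mem_Opos hx ht
    set D := fderiv ℝ g (t • x) (Pi.single i 1) with hD
    have hG : HasDerivAt (fun r => g (Function.update (t • x) i r)) D (t * x i) := by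
      have := pd_hasDerivAt (hg.diffAt hxt) i
      simpa using this
    have hcomp : HasDerivAt (fun s => g (Function.update (t • x) i (t * s))) (D * t) (x i) := by
      have hmul : HasDerivAt (fun s : ℝ => t * s) t (x i) := by
        simpa using (hasDerivAt_id (x i)).const_mul t
      exact hG.comp (x i) hmul
    have hfin : HasDerivAt (fun s => t ^ k * g (Function.update (t • x) i (t * s)))
        (t ^ k * (D * t)) (x i) := hcomp.const_mul _
    have hkey : (fun s => g (Function.update x i s))
        =ᶠ[𝓝 (x i)] (fun s => t ^ k * g (Function.update (t • x) i (t * s))) := by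
      filter_upwards [update_mem_eventually hx i] with s hs
      rw [← smul_update, hg.homog t ht _ hs]
    have : _root_.pd i g x = t ^ k * (D * t) := by
      unfold _root_.pd
      rw [hkey.deriv_eq, hfin.deriv]
    rw [pow_succ, this, hpd_eq _ hxt, ← hD]
    ring

section fmaxlem
variable {S : Finset ι} {f g : ι → ℝ}

lemma fmax_empty (f : ι → ℝ) : fmax ∅ f = 0 := rfl

lemma fmax_insert {i : ι} (h : i ∉ S) (f : ι → ℝ) :
    fmax (insert i S) f = max (f i) (fmax S f) := Finset.fold_insert h

lemma fmax_nonneg (S : Finset ι) (f : ι → ℝ) : 0 ≤ fmax S f := by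
  induction S using Finset.induction_on with
  | empty => simp [fmax_empty]
  | insert _ _ h ih => rw [fmax_insert h]; exact le_max_of_le_right ih

lemma le_fmax {i : ι} (h : i ∈ S) (f : ι → ℝ) : f i ≤ fmax S f := by
  induction S using Finset.induction_on with
  | empty => simp at h
  | @insert j T hj ih =>
    rw [fmax_insert hj]
    rcases Finset.mem_insert.mp h with rfl | h
    · exact le_max_left _ _
    · exact le_max_of_le_right (ih h)

lemma fmax_le {b : ℝ} (hb : 0 ≤ b) (h : ∀ i ∈ S, f i ≤ b) : fmax S f ≤ b := by
  induction S using Finset.induction_on with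
  | empty => simpa [fmax_empty]
  | @insert j T hj ih =>
    rw [fmax_insert hj]
    exact max_le (h j (Finset.mem_insert_self j T))
      (ih fun i hi => h i (Finset.mem_insert_of_mem hi))

lemma fmax_congr (h : ∀ i ∈ S, f i = g i) : fmax S f = fmax S g :=
  Finset.fold_congr h

lemma fmax_union (A B : Finset ι) (f : ι → ℝ) :
    fmax (A ∪ B) f = max (fmax A f) (fmax B f) := by
  apply le_antisymm
  · refine fmax_le (le_max_of_le_left (fmax_nonneg _ _)) fun i hi => ?_
    rcases Finset.mem_union.mp hi with h | h
    · exact le_max_of_le_left (le_fmax h f)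
    · exact le_max_of_le_right (le_fmax h f)
  · refine max_le (fmax_le (fmax_nonneg _ _) fun i hi => le_fmax (Finset.mem_union_left _ hi) f)
      (fmax_le (fmax_nonneg _ _) fun i hi => le_fmax (Finset.mem_union_right _ hi) f)

lemma fmax_subset {A B : Finset ι} (h : A ⊆ B) (f : ι → ℝ) : fmax A f ≤ fmax B f :=
  fmax_le (fmax_nonneg _ _) fun i hi => le_fmax (h hi) f

lemma fmax_smul {c : ℝ} (hc : 0 ≤ c) (S : Finset ι) (f : ι → ℝ) :
    fmax S (fun i => c * f i) = c * fmax S f := by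
  induction S using Finset.induction_on with
  | empty => simp [fmax_empty]
  | @insert j T hj ih =>
    rw [fmax_insert hj, fmax_insert hj, ih, mul_max_of_nonneg _ _ hc]

lemma fmax_le_sum_abs (S : Finset ι) (f : ι → ℝ) : fmax S f ≤ ∑ i ∈ S, |f i| :=
  fmax_le (Finset.sum_nonneg fun i _ => abs_nonneg _)
    (fun i hi => (le_abs_self _).trans (Finset.single_le_sum (fun j _ => abs_nonneg (f j)) hi))

end fmaxlem

lemma vexp_homog (H : Measure (ι → ℝ)) (J : Finset ι) {t : ℝ} (ht : 0 < t) (x : ι → ℝ) :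
    t ^ 1 * Vexp H (t • x) J = Vexp H x J := by
  have hpt : ∀ ω : ι → ℝ, fmax J (fun i => ω i / (t • x) i)
      = t⁻¹ * fmax J (fun i => ω i / x i) := by
    intro ω
    rw [← fmax_smul (by positivity : (0:ℝ) ≤ t⁻¹)]
    apply fmax_congr
    intro i _
    simp only [Pi.smul_apply, smul_eq_mul]
    rw [div_mul_eq_div_div_swap, div_eq_inv_mul]
  unfold Vexp
  rw [show (fun ω : ι → ℝ => fmax J fun i => ω i / (t • x) i)
      = fun ω => t⁻¹ * fmax J (fun i => ω i / x i) from funext hpt]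
  rw [MeasureTheory.integral_const_mul, pow_one, ← mul_assoc, mul_inv_cancel₀ ht.ne', one_mul]

lemma vexp_good (H : Measure (ι → ℝ))
    (hsm : ∀ J : Finset ι, ContDiffOn ℝ (⊤ : ℕ∞) (fun y => Vexp H y J) {x : ι → ℝ | ∀ i, 0 < x i})
    (J : Finset ι) : Good 1 (fun y => Vexp H y J) :=
  ⟨hsm J, fun t ht x _ => vexp_homog H J ht x⟩

lemma decomp (f : (ι → ℝ) → ℝ) (hf : Good 1 f) (L : List ι) :
    ∃ (σ : Type) (_ : Fintype σ) (d : σ → ℕ) (g : σ → (ι → ℝ) → ℝ),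
      (∀ a, Good (d a) (g a)) ∧
      ∀ x ∈ Opos ι, L.foldr _root_.pd (fun y => Real.exp (-(f y))) x
        = Real.exp (-(f x)) * ∑ a, g a x := by
  induction L with
  | nil =>
    refine ⟨PUnit, inferInstance, fun _ => 0, fun _ => fun _ => 1, fun _ => Good.one, ?_⟩
    intro x _
    simp
  | cons i L ih =>
    obtain ⟨σ, _, d, g, hg, hrep⟩ := ih
    refine ⟨σ ⊕ σ, inferInstance, Sum.elim (fun a => d a + 1) (fun a => d a + 2),
      Sum.elim (fun a => _root_.pd i (g a)) (fun a => fun y => -(_root_.pd i f y * g a y)),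
      ?_, ?_⟩
    · rintro (a | a)
      · exact (hg a).pd i
      · exact (((hf.pd i).mul (hg a)).of_eq (by simp [Nat.add_comm])).neg
    · intro x hx
      have hfd : DifferentiableAt ℝ f x := hf.diffAt hx
      have hgd : ∀ a, DifferentiableAt ℝ (g a) x := fun a => (hg a).diffAt hx
      set Df := fderiv ℝ f x (Pi.single i 1) with hDf
      set Dg := fun a => fderiv ℝ (g a) x (Pi.single i 1) with hDg
      -- derivative of the representative function along the i-th line
      have h1 : HasDerivAt (fun s => f (Function.update x i s)) Df (x i) :=
        pd_hasDerivAt hfd i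
      have h2 : HasDerivAt (fun s => Real.exp (-(f (Function.update x i s))))
          (Real.exp (-(f x)) * (-Df)) (x i) := by
        have := h1.neg.exp
        simpa using this
      have h3 : HasDerivAt (fun s => ∑ a, g a (Function.update x i s)) (∑ a, Dg a) (x i) :=
        HasDerivAt.fun_sum fun a _ => pd_hasDerivAt (hgd a) i
      have h4 : HasDerivAt
          (fun s => Real.exp (-(f (Function.update x i s))) * ∑ a, g a (Function.update x i s))
          (Real.exp (-(f x)) * (-Df) * (∑ a, g a x) + Real.exp (-(f x)) * ∑ a, Dg a) (x i) := by
        have := h2.fun_mul h3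
        simpa using this
      have hkey : (fun s => L.foldr _root_.pd (fun y => Real.exp (-(f y))) (Function.update x i s))
          =ᶠ[𝓝 (x i)]
          (fun s => Real.exp (-(f (Function.update x i s)))
            * ∑ a, g a (Function.update x i s)) := by
        filter_upwards [update_mem_eventually hx i] with s hs
        exact hrep _ hs
      have hleft : (i :: L).foldr _root_.pd (fun y => Real.exp (-(f y))) x
          = Real.exp (-(f x)) * (-Df * (∑ a, g a x) + ∑ a, Dg a) := by
        have hshow : (i :: L).foldr _root_.pd (fun y => Real.exp (-(f y))) x
            = deriv (fun s => L.foldr _root_.pd (fun y => Real.exp (-(f y)))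
                (Function.update x i s)) (x i) := rfl
        rw [hshow, hkey.deriv_eq, h4.deriv]
        ring
      rw [hleft]
      rw [Fintype.sum_sum_type]
      simp only [Sum.elim_inl, Sum.elim_inr]
      have hpdg : ∀ a, _root_.pd i (g a) x = Dg a := fun a => pd_eq_fderiv (hgd a) i
      have hpdf : _root_.pd i f x = Df := pd_eq_fderiv hfd i
      simp only [hpdg, hpdf, Finset.sum_neg_distrib, ← Finset.mul_sum]
      ring

lemma coeff_zero_of_tendsto {q : Polynomial ℝ}
    (h : Tendsto (fun t => q.eval t) (𝓝[>] (0:ℝ)) (𝓝 0)) : q.coeff 0 = 0 := by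
  have hc : Tendsto (fun t => q.eval t) (𝓝[>] (0:ℝ)) (𝓝 (q.eval 0)) :=
    ((q.continuous_aeval).tendsto 0).mono_left nhdsWithin_le_nhds
  rw [Polynomial.coeff_zero_eq_eval_zero]
  exact tendsto_nhds_unique hc h

lemma poly_zero_of_superpoly (q : Polynomial ℝ)
    (h : ∀ j : ℕ, Tendsto (fun t => q.eval t / t ^ j) (𝓝[>] (0:ℝ)) (𝓝 0)) : q = 0 := by
  suffices H : ∀ n : ℕ, ∀ q : Polynomial ℝ, q.natDegree ≤ n →
      (∀ j : ℕ, Tendsto (fun t => q.eval t / t ^ j) (𝓝[>] (0:ℝ)) (𝓝 0)) → q = 0 by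
    exact H q.natDegree q le_rfl h
  intro n
  induction n with
  | zero =>
    intro q hdeg h
    have h0 : q.coeff 0 = 0 := coeff_zero_of_tendsto (by simpa using h 0)
    rw [Polynomial.eq_C_of_natDegree_le_zero hdeg, h0, map_zero]
  | succ n ih =>
    intro q hdeg h
    have h0 : q.coeff 0 = 0 := coeff_zero_of_tendsto (by simpa using h 0)
    have hq : q = Polynomial.X * q.divX := by
      have := Polynomial.X_mul_divX_add q
      rw [h0, map_zero, add_zero] at this
      exact this.symm
    have hdiv : (q.divX).natDegree ≤ n := by
      have := Polynomial.natDegree_divX_eq_natDegree_tsub_one (p := q)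
      omega
    have h' : ∀ j : ℕ, Tendsto (fun t => (q.divX).eval t / t ^ j) (𝓝[>] (0:ℝ)) (𝓝 0) := by
      intro j
      apply (h (j + 1)).congr'
      filter_upwards [self_mem_nhdsWithin] with t (ht : t ∈ Set.Ioi (0:ℝ))
      have htne : t ≠ 0 := (Set.mem_Ioi.mp ht).ne'
      conv_lhs => rw [hq]
      simp only [Polynomial.eval_mul, Polynomial.eval_X]
      rw [pow_succ]
      field_simp
    rw [hq, ih q.divX hdiv h', mul_zero]

lemma exp_decay_tendsto {c : ℝ} (hc : 0 < c) (j : ℕ) :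
    Tendsto (fun t : ℝ => Real.exp (-(c / t)) / t ^ j) (𝓝[>] (0:ℝ)) (𝓝 0) := by
  have h1 : Tendsto (fun s : ℝ => s ^ j * Real.exp (-s)) atTop (𝓝 0) :=
    Real.tendsto_pow_mul_exp_neg_atTop_nhds_zero j
  have h3 : Tendsto (fun s : ℝ => c * s) atTop atTop :=
    Tendsto.const_mul_atTop hc tendsto_id
  have h2 : Tendsto (fun s : ℝ => s ^ j * Real.exp (-(c * s))) atTop (𝓝 0) := by
    have h4 := (h1.comp h3).const_mul ((c:ℝ) ^ j)⁻¹
    rw [mul_zero] at h4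
    apply h4.congr
    intro s
    simp only [Function.comp_apply, mul_pow]
    field_simp
  have h5 := h2.comp tendsto_inv_nhdsGT_zero
  apply h5.congr'
  filter_upwards [self_mem_nhdsWithin] with t (ht : t ∈ Set.Ioi (0:ℝ))
  simp only [Function.comp_apply]
  rw [inv_pow, ← div_eq_mul_inv, inv_mul_eq_div]

lemma poly_zero_of_exp (q r : Polynomial ℝ) {c : ℝ} (hc : 0 < c)
    (h : ∀ t : ℝ, t ∈ Set.Ioc (0:ℝ) 1 → q.eval t = Real.exp (-(c / t)) * r.eval t) :
    q = 0 := by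
  obtain ⟨K, hK⟩ := (isCompact_Icc (a := (0:ℝ)) (b := 1)).exists_bound_of_continuousOn
    (r.continuous_aeval.continuousOn)
  apply poly_zero_of_superpoly
  intro j
  have key := exp_decay_tendsto hc j
  have hbound := key.const_mul K
  rw [mul_zero] at hbound
  apply squeeze_zero_norm' ?_ hbound
  filter_upwards [Ioc_mem_nhdsGT_of_mem (by constructor <;> norm_num : (0:ℝ) ∈ Set.Ico (0:ℝ) 1)]
    with t ht
  have ht0 : 0 < t := ht.1
  rw [h t ht]
  have hKpos : ‖r.eval t‖ ≤ K := hK t (Set.mem_Icc.mpr ⟨le_of_lt ht0, ht.2⟩)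
  have : ‖Real.exp (-(c / t)) * r.eval t / t ^ j‖
      = (Real.exp (-(c / t)) / t ^ j) * ‖r.eval t‖ := by
    rw [norm_div, norm_mul]
    rw [Real.norm_eq_abs (Real.exp _), abs_of_pos (Real.exp_pos _),
      Real.norm_eq_abs (t ^ j), abs_of_pos (by positivity)]
    ring
  rw [this]
  calc (Real.exp (-(c / t)) / t ^ j) * ‖r.eval t‖
      ≤ (Real.exp (-(c / t)) / t ^ j) * K := by
        apply mul_le_mul_of_nonneg_left hKpos (by positivity)
    _ = K * (Real.exp (-(c / t)) / t ^ j) := by ring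

lemma sum_scale {σ : Type} [Fintype σ] (d : σ → ℕ) (g : σ → (ι → ℝ) → ℝ)
    (hg : ∀ a, Good (d a) (g a)) (M : ℕ) (hM : ∀ a, d a ≤ M) {t : ℝ} (ht : 0 < t)
    {x : ι → ℝ} (hx : x ∈ Opos ι) :
    ∑ a, t ^ (M - d a) * g a x = t ^ M * ∑ a, g a (t • x) := by
  rw [Finset.mul_sum]
  apply Finset.sum_congr rfl
  intro a _
  rw [← (hg a).homog t ht x hx, ← mul_assoc, ← pow_add, Nat.sub_add_cancel (hM a)]

lemma part1 (H : Measure (ι → ℝ)) (A B C : Finset ι)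
    (hsm : ∀ J : Finset ι, ContDiffOn ℝ (⊤ : ℕ∞) (fun y => Vexp H y J) {x : ι → ℝ | ∀ i, 0 < x i})
    (hdens : ∀ J : Finset ι, C ⊆ J → ∀ x : ι → ℝ, (∀ i, 0 < x i) →
      0 < pdSet C (fun y => Real.exp (-(Vexp H y J))) x)
    (hCI : ∀ x : ι → ℝ, (∀ i, 0 < x i) →
      (pdSet C (fun y => Real.exp (-(Vexp H y (A ∪ C)))) x
          / pdSet C (fun y => Real.exp (-(Vexp H y C))) x)
        * (pdSet C (fun y => Real.exp (-(Vexp H y (B ∪ C)))) x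
          / pdSet C (fun y => Real.exp (-(Vexp H y C))) x)
      = pdSet C (fun y => Real.exp (-(Vexp H y Finset.univ))) x
          / pdSet C (fun y => Real.exp (-(Vexp H y C))) x) :
    ∀ x : ι → ℝ, (∀ i, 0 < x i) →
      Vexp H x (A ∪ C) + Vexp H x (B ∪ C) - Vexp H x Finset.univ - Vexp H x C = 0 := by
  obtain ⟨σ1, I1, d1, g1, hg1, hr1⟩ :=
    decomp (fun y => Vexp H y (A ∪ C)) (vexp_good H hsm _) C.toList
  obtain ⟨σ2, I2, d2, g2, hg2, hr2⟩ :=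
    decomp (fun y => Vexp H y (B ∪ C)) (vexp_good H hsm _) C.toList
  obtain ⟨σ3, I3, d3, g3, hg3, hr3⟩ :=
    decomp (fun y => Vexp H y Finset.univ) (vexp_good H hsm _) C.toList
  obtain ⟨σ4, I4, d4, g4, hg4, hr4⟩ :=
    decomp (fun y => Vexp H y C) (vexp_good H hsm _) C.toList
  -- products of unnormalized densities agree
  have hprod : ∀ y ∈ Opos ι,
      pdSet C (fun y => Real.exp (-(Vexp H y (A ∪ C)))) y
        * pdSet C (fun y => Real.exp (-(Vexp H y (B ∪ C)))) y
      = pdSet C (fun y => Real.exp (-(Vexp H y Finset.univ))) y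
        * pdSet C (fun y => Real.exp (-(Vexp H y C))) y := by
    intro y hy
    have h := hCI y hy
    have h4 := hdens C (subset_refl C) y hy
    field_simp [h4.ne'] at h
    exact mul_right_cancel₀ h4.ne' (by linear_combination (pdSet C (fun y => Real.exp (-(Vexp H y C))) y) * h)
  -- sum identity
  have hS : ∀ y ∈ Opos ι,
      (∑ a, g1 a y) * (∑ a, g2 a y)
        = Real.exp (Vexp H y (A ∪ C) + Vexp H y (B ∪ C)
            - Vexp H y Finset.univ - Vexp H y C) * ((∑ a, g3 a y) * (∑ a, g4 a y)) := by
    intro y hy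
    have key := hprod y hy
    rw [show pdSet C (fun y => Real.exp (-(Vexp H y (A ∪ C)))) y
        = Real.exp (-(Vexp H y (A ∪ C))) * ∑ a, g1 a y from hr1 y hy,
      show pdSet C (fun y => Real.exp (-(Vexp H y (B ∪ C)))) y
        = Real.exp (-(Vexp H y (B ∪ C))) * ∑ a, g2 a y from hr2 y hy,
      show pdSet C (fun y => Real.exp (-(Vexp H y Finset.univ))) y
        = Real.exp (-(Vexp H y Finset.univ)) * ∑ a, g3 a y from hr3 y hy,
      show pdSet C (fun y => Real.exp (-(Vexp H y C))) y
        = Real.exp (-(Vexp H y C)) * ∑ a, g4 a y from hr4 y hy] at key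
    set a := Vexp H y (A ∪ C)
    set b := Vexp H y (B ∪ C)
    set c := Vexp H y Finset.univ
    set e := Vexp H y C
    have h1 : Real.exp a * Real.exp (-a) = 1 := by rw [← Real.exp_add]; simp
    have h2 : Real.exp b * Real.exp (-b) = 1 := by rw [← Real.exp_add]; simp
    calc (∑ a, g1 a y) * (∑ a, g2 a y)
        = (Real.exp a * Real.exp (-a)) * (Real.exp b * Real.exp (-b))
            * ((∑ a, g1 a y) * (∑ a, g2 a y)) := by rw [h1, h2]; ring
      _ = Real.exp a * Real.exp b
            * (Real.exp (-a) * (∑ a, g1 a y) * (Real.exp (-b) * (∑ a, g2 a y))) := by ring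
      _ = Real.exp a * Real.exp b
            * (Real.exp (-c) * (∑ a, g3 a y) * (Real.exp (-e) * (∑ a, g4 a y))) := by rw [key]
      _ = (Real.exp a * Real.exp b * Real.exp (-c) * Real.exp (-e))
            * ((∑ a, g3 a y) * (∑ a, g4 a y)) := by ring
      _ = Real.exp (a + b - c - e) * ((∑ a, g3 a y) * (∑ a, g4 a y)) := by
          rw [← Real.exp_add, ← Real.exp_add, ← Real.exp_add]
          ring_nf
  intro x hx
  -- positivity of the sums at x
  have hposS : ∀ (σ : Type) [Fintype σ] (g : σ → (ι → ℝ) → ℝ) (J : Finset ι), C ⊆ J →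
      (∀ y ∈ Opos ι, pdSet C (fun y => Real.exp (-(Vexp H y J))) y
        = Real.exp (-(Vexp H y J)) * ∑ a, g a y) → 0 < ∑ a, g a x := by
    intro σ _ g J hJ hr
    have h := hdens J hJ x hx
    rw [hr x hx] at h
    rcases mul_pos_iff.mp h with ⟨_, h2⟩ | ⟨h1, _⟩
    · exact h2
    · exact absurd h1 (not_lt.mpr (Real.exp_pos _).le)
  have hS1 : 0 < ∑ a, g1 a x := hposS σ1 g1 (A ∪ C) Finset.subset_union_right hr1
  have hS2 : 0 < ∑ a, g2 a x := hposS σ2 g2 (B ∪ C) Finset.subset_union_right hr2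
  have hS3 : 0 < ∑ a, g3 a x := hposS σ3 g3 Finset.univ (Finset.subset_univ C) hr3
  have hS4 : 0 < ∑ a, g4 a x := hposS σ4 g4 C (subset_refl C) hr4
  -- degrees bound
  set M : ℕ := ((Finset.univ.sup d1) ⊔ (Finset.univ.sup d2))
      ⊔ ((Finset.univ.sup d3) ⊔ (Finset.univ.sup d4)) with hM
  have hM1 : ∀ a, d1 a ≤ M := fun a =>
    le_trans (Finset.le_sup (Finset.mem_univ a)) (le_sup_of_le_left le_sup_left)
  have hM2 : ∀ a, d2 a ≤ M := fun a =>
    le_trans (Finset.le_sup (Finset.mem_univ a)) (le_sup_of_le_left le_sup_right)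
  have hM3 : ∀ a, d3 a ≤ M := fun a =>
    le_trans (Finset.le_sup (Finset.mem_univ a)) (le_sup_of_le_right le_sup_left)
  have hM4 : ∀ a, d4 a ≤ M := fun a =>
    le_trans (Finset.le_sup (Finset.mem_univ a)) (le_sup_of_le_right le_sup_right)
  -- the two polynomials
  set r : Polynomial ℝ := ∑ a, ∑ b,
      Polynomial.C (g1 a x * g2 b x) * Polynomial.X ^ ((M - d1 a) + (M - d2 b)) with hrdef
  set q : Polynomial ℝ := ∑ a, ∑ b,
      Polynomial.C (g3 a x * g4 b x) * Polynomial.X ^ ((M - d3 a) + (M - d4 b)) with hqdef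
  have hev : ∀ (σ τ : Type) [Fintype σ] [Fintype τ] (dA : σ → ℕ) (dB : τ → ℕ)
      (gA : σ → (ι → ℝ) → ℝ) (gB : τ → (ι → ℝ) → ℝ) (t : ℝ),
      (∑ a, ∑ b, Polynomial.C (gA a x * gB b x)
          * Polynomial.X ^ ((M - dA a) + (M - dB b)) : Polynomial ℝ).eval t
        = (∑ a, t ^ (M - dA a) * gA a x) * (∑ b, t ^ (M - dB b) * gB b x) := by
    intro σ τ _ _ dA dB gA gB t
    rw [Finset.sum_mul_sum]
    rw [Polynomial.eval_finset_sum]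
    apply Finset.sum_congr rfl; intro a _
    rw [Polynomial.eval_finset_sum]
    apply Finset.sum_congr rfl; intro b _
    simp only [Polynomial.eval_mul, Polynomial.eval_C, Polynomial.eval_pow, Polynomial.eval_X]
    rw [pow_add]; ring
  -- the exponential identity on (0,1]
  set c : ℝ := Vexp H x (A ∪ C) + Vexp H x (B ∪ C)
      - Vexp H x Finset.univ - Vexp H x C with hc
  have hiden : ∀ t : ℝ, t ∈ Set.Ioc (0:ℝ) 1 → r.eval t = Real.exp (c / t) * q.eval t := by
    intro t ht
    have ht0 : 0 < t := ht.1
    have htx : t • x ∈ Opos ι := smul_mem_Opos hx ht0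
    have hVt : ∀ J : Finset ι, Vexp H (t • x) J = Vexp H x J / t := by
      intro J
      have := vexp_homog H J ht0 x
      rw [pow_one] at this
      field_simp [ht0.ne']
      linarith
    have h1 : r.eval t = (t ^ M * ∑ a, g1 a (t • x)) * (t ^ M * ∑ a, g2 a (t • x)) := by
      rw [hrdef, hev, sum_scale d1 g1 hg1 M hM1 ht0 hx, sum_scale d2 g2 hg2 M hM2 ht0 hx]
    have h2 : q.eval t = (t ^ M * ∑ a, g3 a (t • x)) * (t ^ M * ∑ a, g4 a (t • x)) := by
      rw [hqdef, hev, sum_scale d3 g3 hg3 M hM3 ht0 hx, sum_scale d4 g4 hg4 M hM4 ht0 hx]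
    have h3 := hS (t • x) htx
    rw [hVt, hVt, hVt, hVt] at h3
    have hcd : Vexp H x (A ∪ C) / t + Vexp H x (B ∪ C) / t
        - Vexp H x Finset.univ / t - Vexp H x C / t = c / t := by
      rw [hc]; ring
    rw [hcd] at h3
    rw [h1, h2]
    calc (t ^ M * ∑ a, g1 a (t • x)) * (t ^ M * ∑ a, g2 a (t • x))
        = t ^ M * t ^ M * ((∑ a, g1 a (t • x)) * (∑ a, g2 a (t • x))) := by ring
      _ = t ^ M * t ^ M * (Real.exp (c / t) * ((∑ a, g3 a (t • x)) * (∑ a, g4 a (t • x)))) := by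
          rw [h3]
      _ = Real.exp (c / t) * ((t ^ M * ∑ a, g3 a (t • x)) * (t ^ M * ∑ a, g4 a (t • x))) := by
          ring
  have hr1pos : 0 < r.eval 1 := by
    rw [hrdef, hev]
    simp only [one_pow, one_mul]
    exact mul_pos hS1 hS2
  have hq1pos : 0 < q.eval 1 := by
    rw [hqdef, hev]
    simp only [one_pow, one_mul]
    exact mul_pos hS3 hS4
  -- trichotomy
  rcases lt_trichotomy c 0 with hlt | heq | hgt
  · exfalso
    have hzero : r = 0 := by
      apply poly_zero_of_exp r q (show (0:ℝ) < -c by linarith)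
      intro t ht
      rw [hiden t ht]
      rw [neg_div, neg_neg]
    rw [hzero] at hr1pos
    simp at hr1pos
  · exact heq
  · exfalso
    have hzero : q = 0 := by
      apply poly_zero_of_exp q r hgt
      intro t ht
      have := hiden t ht
      have hexp : Real.exp (-(c / t)) * Real.exp (c / t) = 1 := by
        rw [← Real.exp_add]; simp
      calc q.eval t = (Real.exp (-(c / t)) * Real.exp (c / t)) * q.eval t := by
            rw [hexp, one_mul]
        _ = Real.exp (-(c / t)) * (Real.exp (c / t) * q.eval t) := by ring
        _ = Real.exp (-(c / t)) * r.eval t := by rw [← this]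
    rw [hzero] at hq1pos
    simp at hq1pos

lemma measurable_fmax_comp (S : Finset ι) (φ : ι → (ι → ℝ) → ℝ) (hφ : ∀ i, Measurable (φ i)) :
    Measurable (fun ω : ι → ℝ => fmax S (fun i => φ i ω)) := by
  induction S using Finset.induction_on with
  | empty => simpa [fmax_empty] using measurable_const
  | @insert j T hj ih =>
    have : (fun ω : ι → ℝ => fmax (insert j T) (fun i => φ i ω))
        = fun ω => max (φ j ω) (fmax T (fun i => φ i ω)) := by
      funext ω; rw [fmax_insert hj]
    rw [this]
    exact (hφ j).max ih

lemma integrable_fmax (H : Measure (ι → ℝ)) (hint : ∀ i, Integrable (fun ω => ω i) H)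
    (S : Finset ι) (x : ι → ℝ) :
    Integrable (fun ω : ι → ℝ => fmax S (fun i => ω i / x i)) H := by
  have hmeas : Measurable (fun ω : ι → ℝ => fmax S (fun i => ω i / x i)) :=
    measurable_fmax_comp S (fun i ω => ω i / x i)
      (fun i => by fun_prop)
  apply Integrable.mono' (g := fun ω => ∑ i ∈ S, |ω i / x i|)
    (integrable_finset_sum _ (fun i _ => ((hint i).div_const (x i)).abs))
    hmeas.aestronglyMeasurable
  apply ae_of_all
  intro ω
  rw [Real.norm_eq_abs, abs_of_nonneg (fmax_nonneg _ _)]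
  exact fmax_le_sum_abs S _

lemma part2 (H : Measure (ι → ℝ)) (hint : ∀ i, Integrable (fun ω => ω i) H)
    (A B C : Finset ι) (hC : C = (A ∪ B)ᶜ)
    (hd : ∀ x : ι → ℝ, (∀ i, 0 < x i) →
      Vexp H x (A ∪ C) + Vexp H x (B ∪ C) - Vexp H x Finset.univ - Vexp H x C = 0)
    (x : ι → ℝ) (hx : ∀ i, 0 < x i) :
    Vexp H x A + Vexp H x B = Vexp H x (A ∪ B) := by
  classical
  -- the constant E
  set fC : (ι → ℝ) → ℝ := fun ω => fmax C (fun i => ω i) with hfC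
  have hfC1 : fC = fun ω => fmax C (fun i => ω i / (fun _ => (1:ℝ)) i) := by
    funext ω; rw [hfC]; apply fmax_congr; intro i _; simp
  have hIC : Integrable fC H := by
    rw [hfC1]; exact integrable_fmax H hint C _
  set E : ℝ := ∫ ω, fC ω ∂H with hE
  have hE0 : 0 ≤ E := integral_nonneg fun ω => fmax_nonneg _ _
  have hnotC : ∀ i ∈ A ∪ B, i ∉ C := by
    intro i hi hiC
    rw [hC, Finset.mem_compl] at hiC
    exact hiC hi
  -- the key estimate
  have key : ∀ n : ℕ, 0 < n →
      |Vexp H x A + Vexp H x B - Vexp H x (A ∪ B)| ≤ 2 * ((n:ℝ)⁻¹ * E) := by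
    intro n hn
    have hnR : (0:ℝ) < n := Nat.cast_pos.mpr hn
    set xn : ι → ℝ := fun i => if i ∈ C then (n:ℝ) else x i with hxn
    have hxnpos : ∀ i, 0 < xn i := by
      intro i
      by_cases h : i ∈ C
      · simp [hxn, h, hnR]
      · simp [hxn, h, hx i]
    -- generic bound for J' disjoint from C
    have hbound : ∀ J' : Finset ι, (∀ i ∈ J', i ∉ C) →
        Vexp H x J' ≤ Vexp H xn (J' ∪ C) ∧
        Vexp H xn (J' ∪ C) ≤ Vexp H x J' + (n:ℝ)⁻¹ * E := by
      intro J' hJ'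
      set fJ : (ι → ℝ) → ℝ := fun ω => fmax J' (fun i => ω i / x i) with hfJ
      have hpt : ∀ ω : ι → ℝ, fmax (J' ∪ C) (fun i => ω i / xn i)
          = max (fJ ω) ((n:ℝ)⁻¹ * fC ω) := by
        intro ω
        rw [fmax_union]
        congr 1
        · apply fmax_congr
          intro i hi
          rw [hxn]
          simp [hJ' i hi]
        · rw [← fmax_smul (inv_nonneg.mpr (Nat.cast_nonneg n))]
          apply fmax_congr
          intro i hi
          rw [hxn]
          simp only [hi, if_true]
          rw [div_eq_inv_mul]
      have hVxn : Vexp H xn (J' ∪ C) = ∫ ω, max (fJ ω) ((n:ℝ)⁻¹ * fC ω) ∂H := by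
        unfold Vexp
        exact integral_congr_ae (ae_of_all _ hpt)
      have hIJ : Integrable fJ H := integrable_fmax H hint J' x
      have hICn : Integrable (fun ω => (n:ℝ)⁻¹ * fC ω) H := hIC.const_mul _
      have hImax : Integrable (fun ω => max (fJ ω) ((n:ℝ)⁻¹ * fC ω)) H := by
        have := integrable_fmax H hint (J' ∪ C) xn
        apply this.congr
        exact ae_of_all _ hpt
      constructor
      · rw [hVxn]
        exact integral_mono hIJ hImax (fun ω => le_max_left _ _)
      · rw [hVxn]
        calc ∫ ω, max (fJ ω) ((n:ℝ)⁻¹ * fC ω) ∂H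
            ≤ ∫ ω, fJ ω + (n:ℝ)⁻¹ * fC ω ∂H := by
              apply integral_mono hImax (hIJ.add hICn)
              intro ω
              apply max_le
              · exact le_add_of_nonneg_right (mul_nonneg (inv_nonneg.mpr (Nat.cast_nonneg n)) (fmax_nonneg _ _))
              · exact le_add_of_nonneg_left (fmax_nonneg _ _)
          _ = Vexp H x J' + (n:ℝ)⁻¹ * E := by
              rw [integral_add hIJ hICn, MeasureTheory.integral_const_mul]
              rfl
    have hA := hbound A (fun i hi => hnotC i (Finset.mem_union_left _ hi))
    have hB := hbound B (fun i hi => hnotC i (Finset.mem_union_right _ hi))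
    have hAB := hbound (A ∪ B) hnotC
    have huniv : Finset.univ = (A ∪ B) ∪ C := by
      rw [hC, Finset.union_compl]
    have hVC : Vexp H xn C = (n:ℝ)⁻¹ * E := by
      unfold Vexp
      rw [hE, ← MeasureTheory.integral_const_mul]
      apply integral_congr_ae (ae_of_all _ ?_)
      intro ω
      rw [← fmax_smul (inv_nonneg.mpr (Nat.cast_nonneg n))]
      apply fmax_congr
      intro i hi
      simp [hxn, hi, div_eq_inv_mul]
    have h0 := hd xn hxnpos
    rw [huniv] at h0
    rw [hVC] at h0
    have hEn : 0 ≤ (n:ℝ)⁻¹ * E := by positivity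
    rw [abs_le]
    constructor
    · linarith [hA.1, hB.1, hAB.2]
    · linarith [hA.2, hB.2, hAB.1]
  -- conclude
  by_contra hne
  have hne' : Vexp H x A + Vexp H x B - Vexp H x (A ∪ B) ≠ 0 := fun h => hne (by linarith)
  set s := |Vexp H x A + Vexp H x B - Vexp H x (A ∪ B)| with hs
  have hspos : 0 < s := abs_pos.mpr hne'
  obtain ⟨n, hn⟩ := exists_nat_gt (2 * E / s)
  have hnpos : 0 < n := by
    by_contra hc
    push_neg at hc
    interval_cases n
    have hnn := div_nonneg (by linarith : (0:ℝ) ≤ 2 * E) hspos.le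
    simp at hn
    linarith
  have h1 := key n hnpos
  have hnR : (0:ℝ) < n := Nat.cast_pos.mpr hnpos
  have h2 : 2 * E < (n:ℝ) * s := by
    rw [div_lt_iff₀ hspos] at hn
    linarith
  have h3 : 2 * ((n:ℝ)⁻¹ * E) < s := by
    rw [show 2 * ((n:ℝ)⁻¹ * E) = 2 * E / n by field_simp]
    rw [div_lt_iff₀ hnR]
    linarith
  linarith

end CIaux

end CIauxSection

/-- Analytic core of the main theorem: let `V^J(x) = ∫ max_{i∈J} ω_i/x_i dH` be the exponent
functions of a simple max-stable vector whose distribution `G^J = exp(−V^J)` has a positive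
(continuous) density, encoded by smoothness of the `V^J` and positivity of the mixed partial
derivatives `G^J_C = ∂^{|C|}/∂x_C G^J`, with `A, B` disjoint nonempty and `C = I \ (A∪B)`.
If the conditional-independence identity
`G(x_A|x_C)·G(x_B|x_C) = G(x_{A∪B}|x_C)`, i.e.
`(G^{A∪C}_C/G^C_C)·(G^{B∪C}_C/G^C_C) = G^I_C/G^C_C`, holds for all `x > 0`, then
`d_{A,B}(x) = V^{A∪C}(x) + V^{B∪C}(x) − V^I(x) − V^C(x)` vanishes identically, and
consequently `V^A(x_A) + V^B(x_B) = V^{A∪B}(x_{A∪B})` for all `x > 0`, i.e. `X_A ⫫ X_B`. -/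
theorem conditional_independence_implies_independence [Fintype ι]
    (H : Measure (ι → ℝ)) [IsFiniteMeasure H]
    (hpos : ∀ᵐ ω ∂H, ∀ i, 0 ≤ ω i)
    (hint : ∀ i, Integrable (fun ω => ω i) H)
    (hmom : ∀ i, (∫ ω, ω i ∂H) = 1)
    (A B : Finset ι) (hA : A.Nonempty) (hB : B.Nonempty) (hAB : Disjoint A B)
    (C : Finset ι) (hC : C = (A ∪ B)ᶜ)
    (hsm : ∀ J : Finset ι, ContDiffOn ℝ (⊤ : ℕ∞) (fun y => Vexp H y J) {x : ι → ℝ | ∀ i, 0 < x i})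
    (hdens : ∀ J : Finset ι, C ⊆ J → ∀ x : ι → ℝ, (∀ i, 0 < x i) →
      0 < pdSet C (fun y => Real.exp (-(Vexp H y J))) x)
    (hCI : ∀ x : ι → ℝ, (∀ i, 0 < x i) →
      (pdSet C (fun y => Real.exp (-(Vexp H y (A ∪ C)))) x
          / pdSet C (fun y => Real.exp (-(Vexp H y C))) x)
        * (pdSet C (fun y => Real.exp (-(Vexp H y (B ∪ C)))) x
          / pdSet C (fun y => Real.exp (-(Vexp H y C))) x)
      = pdSet C (fun y => Real.exp (-(Vexp H y Finset.univ))) x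
          / pdSet C (fun y => Real.exp (-(Vexp H y C))) x) :
    (∀ x : ι → ℝ, (∀ i, 0 < x i) →
      Vexp H x (A ∪ C) + Vexp H x (B ∪ C) - Vexp H x Finset.univ - Vexp H x C = 0)
    ∧ (∀ x : ι → ℝ, (∀ i, 0 < x i) →
      Vexp H x A + Vexp H x B = Vexp H x (A ∪ B)) := by
  have h1 := CIaux.part1 H A B C hsm hdens hCI
  exact ⟨h1, CIaux.part2 H hint A B C hC h1⟩
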